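/- arXiv:2406.10646 — 3 statements merged into one kernel-verified Lean document; each statement's English description precedes it below -/
import Mathlib

section
/- Let u≥3 be odd. For all λ,λ′∈P⁺ᵘ and all n∈ℤ: S^{BP}_{∇ⁿ(λ),λ′} = e^{−2πi·n·(j_{λ′}−u/3)}·S^{BP}_{λ,λ′}, and S^{BP}_{d(λ),d(λ′)} = e^{2πi(j_λ+j_{λ′})}·S^{BP}_{λ,λ′}. -/
noncomputable section

open Complex

/-- The six elements of the Weyl group `S₃` of sl₃ acting on weights in
Dynkin-label coordinates: `id, w₁, w₂, w₁w₂, w₂w₁, w₃`. -/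
def wmap (w : Fin 6) (x : ℂ × ℂ) : ℂ × ℂ :=
  ![x, (-x.1, x.1 + x.2), (x.1 + x.2, -x.2), (-x.1 - x.2, x.1),
    (x.2, -x.1 - x.2), (-x.2, -x.1)] w

/-- The signs of the six Weyl group elements. -/
def wdet : Fin 6 → ℤ := ![1, -1, -1, 1, 1, -1]

/-- The normalised invariant bilinear form of sl₃ in Dynkin-label coordinates. -/
def bform (x y : ℂ × ℂ) : ℂ :=
  (2 * x.1 * y.1 + x.1 * y.2 + x.2 * y.1 + 2 * x.2 * y.2) / 3

/-- The Weyl vector `ρ = (1,1)`. -/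
def rho : ℂ × ℂ := (1, 1)

/-- The finite part `λ̄ = (λ₁,λ₂)` of a triple `λ = (λ₀,λ₁,λ₂)`. -/
def bar (l : ℕ × ℕ × ℕ) : ℂ × ℂ := ((l.2.1 : ℂ), (l.2.2 : ℂ))

/-- `j_λ = -(λ₁-λ₂)/3`. -/
def jBP (l : ℕ × ℕ × ℕ) : ℂ := -(((l.2.1 : ℂ) - (l.2.2 : ℂ)) / 3)

/-- The Bershadsky–Polyakov minimal-model S-matrix. -/
def SBP (u : ℕ) (l l' : ℕ × ℕ × ℕ) : ℂ :=
  (I / (Real.sqrt 3 * u)) * exp (2 * Real.pi * I * (jBP l + jBP l' - (u : ℂ) / 3)) *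
    ∑ w : Fin 6, (wdet w : ℂ) *
      exp (-4 * Real.pi * I * bform (wmap w (bar l + rho)) (bar l' + rho) / u)

/-- `∇(λ₀,λ₁,λ₂) = (λ₁,λ₂,λ₀)`. -/
def nabla (l : ℕ × ℕ × ℕ) : ℕ × ℕ × ℕ := (l.2.1, l.2.2, l.1)

/-- `d(λ₀,λ₁,λ₂) = (λ₀,λ₂,λ₁)`. -/
def dd (l : ℕ × ℕ × ℕ) : ℕ × ℕ × ℕ := (l.1, l.2.2, l.2.1)

/-- The `ℤ`-action `n ↦ ∇ⁿ` (well defined since `∇³ = id`). -/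
def nablaZ (n : ℤ) (l : ℕ × ℕ × ℕ) : ℕ × ℕ × ℕ := nabla^[(n % 3).toNat] l



lemma expc (m : ℤ) {x y : ℂ} (h : x = y + m * (2 * Real.pi * I)) : exp x = exp y := by
  rw [h, exp_add, Complex.exp_int_mul_two_pi_mul_I, mul_one]

lemma key (d : ℂ) (m : ℤ) {x y z : ℂ} (h : x = y + z + m * (2 * Real.pi * I)) :
    d * exp x = exp y * (d * exp z) := by
  rw [h, exp_add, exp_add, Complex.exp_int_mul_two_pi_mul_I, mul_one]; ring

lemma wmap0 (x : ℂ × ℂ) : wmap 0 x = x := rfl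
lemma wmap0' (x : ℂ × ℂ) (h : (0:ℕ) < 6) : wmap ⟨0, h⟩ x = x := rfl
lemma wdet0 : wdet 0 = 1 := rfl
lemma wdet0' (h : (0:ℕ) < 6) : wdet ⟨0, h⟩ = 1 := rfl
lemma wmap1 (x : ℂ × ℂ) : wmap 1 x = (-x.1, x.1 + x.2) := rfl
lemma wmap1' (x : ℂ × ℂ) (h : (1:ℕ) < 6) : wmap ⟨1, h⟩ x = (-x.1, x.1 + x.2) := rfl
lemma wdet1 : wdet 1 = -1 := rfl
lemma wdet1' (h : (1:ℕ) < 6) : wdet ⟨1, h⟩ = -1 := rfl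
lemma wmap2 (x : ℂ × ℂ) : wmap 2 x = (x.1 + x.2, -x.2) := rfl
lemma wmap2' (x : ℂ × ℂ) (h : (2:ℕ) < 6) : wmap ⟨2, h⟩ x = (x.1 + x.2, -x.2) := rfl
lemma wdet2 : wdet 2 = -1 := rfl
lemma wdet2' (h : (2:ℕ) < 6) : wdet ⟨2, h⟩ = -1 := rfl
lemma wmap3 (x : ℂ × ℂ) : wmap 3 x = (-x.1 - x.2, x.1) := rfl
lemma wmap3' (x : ℂ × ℂ) (h : (3:ℕ) < 6) : wmap ⟨3, h⟩ x = (-x.1 - x.2, x.1) := rfl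
lemma wdet3 : wdet 3 = 1 := rfl
lemma wdet3' (h : (3:ℕ) < 6) : wdet ⟨3, h⟩ = 1 := rfl
lemma wmap4 (x : ℂ × ℂ) : wmap 4 x = (x.2, -x.1 - x.2) := rfl
lemma wmap4' (x : ℂ × ℂ) (h : (4:ℕ) < 6) : wmap ⟨4, h⟩ x = (x.2, -x.1 - x.2) := rfl
lemma wdet4 : wdet 4 = 1 := rfl
lemma wdet4' (h : (4:ℕ) < 6) : wdet ⟨4, h⟩ = 1 := rfl
lemma wmap5 (x : ℂ × ℂ) : wmap 5 x = (-x.2, -x.1) := rfl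
lemma wmap5' (x : ℂ × ℂ) (h : (5:ℕ) < 6) : wmap ⟨5, h⟩ x = (-x.2, -x.1) := rfl
lemma wdet5 : wdet 5 = -1 := rfl
lemma wdet5' (h : (5:ℕ) < 6) : wdet ⟨5, h⟩ = -1 := rfl

lemma stepN (u : ℕ) (hu : 3 ≤ u) (l l' : ℕ × ℕ × ℕ)
    (hl : l.1 + l.2.1 + l.2.2 = u - 3) :
    SBP u (nabla l) l' = exp (-2 * Real.pi * I * (jBP l' - (u : ℂ) / 3)) * SBP u l l' := by
  obtain ⟨a, b, c⟩ := l
  obtain ⟨a', b', c'⟩ := l'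
  simp only at hl
  have hu0 : (u : ℂ) ≠ 0 := Nat.cast_ne_zero.mpr (by omega)
  have hc : (a : ℂ) = (u : ℂ) - 3 - b - c := by
    have h3 : ((a + b + c + 3 : ℕ) : ℂ) = (u : ℂ) := by norm_cast; omega
    push_cast at h3
    linear_combination h3
  simp only [SBP, nabla]
  set carg : ℂ := -4 * Real.pi * I * ((b' : ℂ) + 2 * c' + 3) / 3 with hcarg
  have hsum : (∑ w : Fin 6, (wdet w : ℂ) *
        exp (-4 * Real.pi * I * bform (wmap w (bar (b, c, a) + rho)) (bar (a', b', c') + rho) / u))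
      = exp carg * ∑ w : Fin 6, (wdet w : ℂ) *
        exp (-4 * Real.pi * I * bform (wmap w (bar (a, b, c) + rho)) (bar (a', b', c') + rho) / u) := by
    rw [Finset.mul_sum]
    refine Fintype.sum_bijective (![4, 5, 1, 0, 3, 2] : Fin 6 → Fin 6) (by decide) _ _ ?_
    intro w
    fin_cases w <;>
      norm_num [wmap0, wmap1, wmap2, wmap3, wmap4, wmap5,
        wmap0', wmap1', wmap2', wmap3', wmap4', wmap5',
        wdet0, wdet1, wdet2, wdet3, wdet4, wdet5,
        wdet0', wdet1', wdet2', wdet3', wdet4', wdet5', bform, bar, rho, Prod.mk_add_mk] <;>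
      rw [← Complex.exp_add]
    · exact expc 0 (by rw [hcarg, hc]; push_cast; field_simp; ring)
    · exact expc 0 (by rw [hcarg, hc]; push_cast; field_simp; ring)
    · exact expc (2 * ((c' : ℤ) + 1)) (by rw [hcarg, hc]; push_cast; field_simp; ring)
    · exact expc (2 * ((b' : ℤ) + c' + 2)) (by rw [hcarg, hc]; push_cast; field_simp; ring)
    · exact expc (2 * ((c' : ℤ) + 1)) (by rw [hcarg, hc]; push_cast; field_simp; ring)
    · exact expc (2 * ((b' : ℤ) + c' + 2)) (by rw [hcarg, hc]; push_cast; field_simp; ring)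
  rw [hsum]
  have hpre : exp (2 * Real.pi * I * (jBP (b, c, a) + jBP (a', b', c') - (u : ℂ) / 3)) * exp carg
      = exp (-2 * Real.pi * I * (jBP (a', b', c') - (u : ℂ) / 3))
        * exp (2 * Real.pi * I * (jBP (a, b, c) + jBP (a', b', c') - (u : ℂ) / 3)) := by
    rw [← Complex.exp_add, ← Complex.exp_add]
    exact expc (-(3 + (c : ℤ) + b' + c')) (by
      simp only [jBP, hcarg]; rw [hc]; push_cast; ring)
  linear_combination (I / (Real.sqrt 3 * u) *
    ∑ w : Fin 6, (wdet w : ℂ) *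
      exp (-4 * Real.pi * I * bform (wmap w (bar (a, b, c) + rho)) (bar (a', b', c') + rho) / u)) * hpre

lemma stepD (u : ℕ) (l l' : ℕ × ℕ × ℕ) :
    SBP u (dd l) (dd l') = exp (2 * Real.pi * I * (jBP l + jBP l')) * SBP u l l' := by
  obtain ⟨a, b, c⟩ := l
  obtain ⟨a', b', c'⟩ := l'
  simp only [SBP, dd]
  have hsum : (∑ w : Fin 6, (wdet w : ℂ) *
        exp (-4 * Real.pi * I * bform (wmap w (bar (a, c, b) + rho)) (bar (a', c', b') + rho) / u))
      = ∑ w : Fin 6, (wdet w : ℂ) *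
        exp (-4 * Real.pi * I * bform (wmap w (bar (a, b, c) + rho)) (bar (a', b', c') + rho) / u) := by
    refine Fintype.sum_bijective (![0, 2, 1, 4, 3, 5] : Fin 6 → Fin 6) (by decide) _ _ ?_
    intro w
    fin_cases w <;>
      · norm_num [wmap0, wmap1, wmap2, wmap3, wmap4, wmap5,
          wmap0', wmap1', wmap2', wmap3', wmap4', wmap5',
          wdet0, wdet1, wdet2, wdet3, wdet4, wdet5,
          wdet0', wdet1', wdet2', wdet3', wdet4', wdet5',
          bform, bar, rho, Prod.mk_add_mk]
        congr 1
        ring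
  rw [hsum]
  set m : ℤ := (b:ℤ) - c + b' - c' with hm
  rw [show 2 * Real.pi * I * (jBP (a, c, b) + jBP (a', c', b') - (u:ℂ) / 3)
      = 2 * Real.pi * I * (jBP (a, b, c) + jBP (a', b', c'))
        + 2 * Real.pi * I * (jBP (a, b, c) + jBP (a', b', c') - (u:ℂ) / 3)
        + (m:ℂ) * (2 * Real.pi * I) from by simp only [jBP, hm]; push_cast; ring]
  rw [exp_add, exp_add, Complex.exp_int_mul_two_pi_mul_I, mul_one]
  ring

/-- Symmetries of the Bershadsky–Polyakov S-matrix: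
`S^{BP}_{∇ⁿ(λ),λ′} = e^{-2πi·n·(j_{λ′}-u/3)}·S^{BP}_{λ,λ′}` and
`S^{BP}_{d(λ),d(λ′)} = e^{2πi(j_λ+j_{λ′})}·S^{BP}_{λ,λ′}`. -/
theorem stmt6 (u : ℕ) (hu : 3 ≤ u) (hodd : Odd u)
    (l l' : ℕ × ℕ × ℕ)
    (hl : l.1 + l.2.1 + l.2.2 = u - 3) (hl' : l'.1 + l'.2.1 + l'.2.2 = u - 3)
    (n : ℤ) :
    SBP u (nablaZ n l) l'
      = exp (-2 * Real.pi * I * (n : ℂ) * (jBP l' - (u : ℂ) / 3)) * SBP u l l' ∧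
    SBP u (dd l) (dd l')
      = exp (2 * Real.pi * I * (jBP l + jBP l')) * SBP u l l' := by
  constructor
  · have h03 : n % 3 = 0 ∨ n % 3 = 1 ∨ n % 3 = 2 := by omega
    rcases h03 with h | h | h
    · have hq : (3 : ℤ) * (n / 3) = n := by omega
      have hnc : (n : ℂ) = 3 * ((n / 3 : ℤ) : ℂ) := by
        calc (n : ℂ) = ((3 * (n / 3) : ℤ) : ℂ) := by rw [hq]
        _ = 3 * ((n / 3 : ℤ) : ℂ) := by push_cast; ring
      rw [show nablaZ n l = l from by unfold nablaZ; rw [h]; rfl]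
      rw [show exp (-2 * Real.pi * I * (n : ℂ) * (jBP l' - (u : ℂ) / 3)) = 1 from by
        rw [← Complex.exp_zero]
        exact expc ((n / 3) * ((l'.2.1 : ℤ) - l'.2.2 + u)) (by
          simp only [jBP]; rw [hnc]; push_cast; ring), one_mul]
    · have hq : (3 : ℤ) * (n / 3) + 1 = n := by omega
      have hnc : (n : ℂ) = 3 * ((n / 3 : ℤ) : ℂ) + 1 := by
        calc (n : ℂ) = ((3 * (n / 3) + 1 : ℤ) : ℂ) := by rw [hq]
        _ = 3 * ((n / 3 : ℤ) : ℂ) + 1 := by push_cast; ring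
      rw [show nablaZ n l = nabla l from by unfold nablaZ; rw [h]; rfl]
      rw [stepN u hu l l' hl]
      congr 1
      exact expc (-((n / 3) * ((l'.2.1 : ℤ) - l'.2.2 + u))) (by
        simp only [jBP]; rw [hnc]; push_cast; ring)
    · have hq : (3 : ℤ) * (n / 3) + 2 = n := by omega
      have hnc : (n : ℂ) = 3 * ((n / 3 : ℤ) : ℂ) + 2 := by
        calc (n : ℂ) = ((3 * (n / 3) + 2 : ℤ) : ℂ) := by rw [hq]
        _ = 3 * ((n / 3 : ℤ) : ℂ) + 2 := by push_cast; ring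
      have hnl : (nabla l).1 + (nabla l).2.1 + (nabla l).2.2 = u - 3 := by
        simp only [nabla]; omega
      rw [show nablaZ n l = nabla (nabla l) from by unfold nablaZ; rw [h]; rfl]
      rw [stepN u hu (nabla l) l' hnl, stepN u hu l l' hl, ← mul_assoc, ← Complex.exp_add]
      congr 1
      exact expc (-((n / 3) * ((l'.2.1 : ℤ) - l'.2.2 + u))) (by
        simp only [jBP]; rw [hnc]; push_cast; ring)
  · exact stepD u l l'


end
end

section
/- Let u≥3 be odd. Then 𝒮ᵘ_{vac,Λ} ≠ 0 and S^{BP}_{vac,Λ} ≠ 0 for every Λ∈P⁺ᵘ, and for all λ,μ,ν∈P⁺ᵘ the two Verlinde sums agree: N^{BP}(λ,μ,ν) = N^{(u,1)}(λ,μ,ν). (The Verlinde-formula fusion multiplicities of the Bershadsky–Polyakov minimal model coincide with those of the level-(u−3) sl₃ WZW model.) -/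
noncomputable section

open Complex

/-- The set `P⁺ᵘ` of triples of nonnegative integers summing to `u-3`. -/
def Pplus (u : ℕ) : Finset (ℕ × ℕ × ℕ) :=
  (Finset.range u ×ˢ Finset.range u ×ˢ Finset.range u).filter
    (fun l => l.1 + l.2.1 + l.2.2 = u - 3)

/-- The level-`(u-3)` sl₃ WZW S-matrix entry `𝒮ᵘ_{λ,λ′}`. -/
def ScalP (u : ℕ) (l l' : ℕ × ℕ × ℕ) : ℂ :=
  (-I / (Real.sqrt 3 * u)) *
    ∑ w : Fin 6, (wdet w : ℂ) *
      exp (-2 * Real.pi * I * bform (wmap w (bar l + rho)) (bar l' + rho) / u)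

/-- The vacuum weight `vac = (u-3,0,0)`. -/
def vac (u : ℕ) : ℕ × ℕ × ℕ := (u - 3, 0, 0)

/-- The sl₃ WZW Verlinde sum `N^{(u,1)}(λ,μ,ν)`. -/
def Nsl (u : ℕ) (a b c : ℕ × ℕ × ℕ) : ℂ :=
  ∑ L ∈ Pplus u,
    ScalP u a L * ScalP u b L * (starRingEnd ℂ) (ScalP u c L) / ScalP u (vac u) L

/-- The Bershadsky–Polyakov Verlinde sum `N^{BP}(λ,μ,ν)`. -/
def NBP (u : ℕ) (a b c : ℕ × ℕ × ℕ) : ℂ :=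
  ∑ L ∈ Pplus u,
    SBP u a L * SBP u b L * (starRingEnd ℂ) (SBP u c L) / SBP u (vac u) L


open scoped Real ComplexConjugate

/-!
Both S-matrices are alternating sums over the Weyl group. The Bershadsky–Polyakov one is the
sl₃ one evaluated at `2(Λ̄ + ρ)`, and for odd `u` the affine Weyl group at level `u` folds
`2(Λ̄ + ρ)` onto `σΛ̄ + ρ` for a permutation `σ` of `P⁺ᵘ`. Hence
`S^{BP}_{λ,Λ} = e^{2πi j_λ} κ_Λ 𝒮ᵘ_{λ,σΛ}` with `|κ_Λ| = 1`, and the Verlinde sums satisfy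
`N^{BP} = e^{2πi(j_λ+j_μ-j_ν)} N^{(u,1)}`. The simple current `Λ ↦ (Λ₂, Λ₀, Λ₁)` multiplies
`𝒮ᵘ_{λ,Λ}` by `e^{-2πi j_λ}`, so reindexing by it gives
`N^{(u,1)} = e^{-2πi(j_λ+j_μ-j_ν)} N^{(u,1)}`: either the phase is trivial or `N^{(u,1)} = 0`,
and in both cases the phase in front of `N^{BP}` can be dropped. The vacuum rows are nonzero by
the Weyl denominator formula.
-/

def weylAltSum (t : ℂ) (x y : ℂ × ℂ) : ℂ :=
  ∑ w : Fin 6, (wdet w : ℂ) * exp (t * bform (wmap w x) y)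

theorem weylAltSum_wmap_right (t : ℂ) (x y : ℂ × ℂ) (g : Fin 6) :
    weylAltSum t x (wmap g y) = wdet g * weylAltSum t x y := by
  fin_cases g <;>
    simp only [weylAltSum, Fin.sum_univ_six, wmap, wdet, bform, Matrix.cons_val] <;>
    push_cast <;> ring_nf

-- The Weyl denominator formula.
theorem weylAltSum_rho (t a b : ℂ) :
    weylAltSum t rho (a, b) =
      exp (-(t * (a + b))) * (exp (t * a) - 1) * (exp (t * b) - 1) * (exp (t * (a + b)) - 1) := by
  have hsum : weylAltSum t rho (a, b) = exp (t * (a + b)) - exp (t * b) - exp (t * a)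
      + exp (-(t * a)) + exp (-(t * b)) - exp (-(t * (a + b))) := by
    simp only [weylAltSum, Fin.sum_univ_six, wmap, wdet, bform, rho, Matrix.cons_val]
    ring_nf
  rw [hsum, mul_add t a b, exp_add, neg_add, exp_add, exp_neg, exp_neg]
  have := exp_ne_zero (t * a)
  have := exp_ne_zero (t * b)
  field_simp
  ring

theorem exp_neg_two_pi_I_div_mul_ne_one {u a : ℕ} (ha : 0 < a) (hau : a < u) :
    exp (-2 * π * I / u * a) ≠ 1 := by
  have hζ := (isPrimitiveRoot_exp u (by omega)).inv
  have h : exp (-2 * π * I / u * a) = (exp (2 * π * I / u))⁻¹ ^ a := by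
    rw [← exp_neg, ← exp_nat_mul]
    ring_nf
  rw [h]
  exact hζ.pow_ne_one_of_pos_of_lt ha.ne' hau

theorem weylAltSum_rho_ne_zero {u a b : ℕ} (ha : 0 < a) (hb : 0 < b) (hab : a + b < u) :
    weylAltSum (-2 * π * I / u) rho (a, b) ≠ 0 := by
  rw [weylAltSum_rho]
  refine mul_ne_zero (mul_ne_zero (mul_ne_zero (exp_ne_zero _) ?_) ?_) ?_ <;> rw [sub_ne_zero]
  · exact exp_neg_two_pi_I_div_mul_ne_one ha (by omega)
  · exact exp_neg_two_pi_I_div_mul_ne_one hb (by omega)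
  · exact_mod_cast exp_neg_two_pi_I_div_mul_ne_one (Nat.add_pos_left ha b) hab

def IsIntWeight (x : ℂ × ℂ) : Prop := ∃ m n : ℤ, x = ((m : ℂ), (n : ℂ))

theorem isIntWeight_bar_add_rho (l : ℕ × ℕ × ℕ) : IsIntWeight (bar l + rho) :=
  ⟨l.2.1 + 1, l.2.2 + 1, by simp [bar, rho]⟩

theorem exp_neg_two_pi_I_mul_intCast (k : ℤ) : exp (-2 * π * I * k) = 1 := by
  rw [show -2 * π * I * k = (-k : ℤ) * (2 * π * I) by push_cast; ring]
  exact exp_int_mul_two_pi_mul_I _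

-- `wmap w x - x` lies in the root lattice, which pairs integrally with the weight lattice.
theorem IsIntWeight.exists_bform_wmap_eq {x T : ℂ × ℂ} (hx : IsIntWeight x)
    (hT : IsIntWeight T) (w : Fin 6) : ∃ k : ℤ, bform (wmap w x) T = bform x T + k := by
  obtain ⟨⟨m, n, rfl⟩, ⟨p, q, rfl⟩⟩ := And.intro hx hT
  fin_cases w
  · exact ⟨0, by simp only [wmap, bform]; push_cast; ring⟩
  · exact ⟨-m * p, by simp only [wmap, bform]; push_cast; ring⟩
  · exact ⟨-n * q, by simp only [wmap, bform]; push_cast; ring⟩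
  · exact ⟨(-m - n) * p - n * q, by simp only [wmap, bform]; push_cast; ring⟩
  · exact ⟨-m * p + (-m - n) * q, by simp only [wmap, bform]; push_cast; ring⟩
  · exact ⟨(-m - n) * (p + q), by simp only [wmap, bform]; push_cast; ring⟩

theorem IsIntWeight.exp_bform_wmap {x T : ℂ × ℂ} (hx : IsIntWeight x) (hT : IsIntWeight T)
    (w : Fin 6) : exp (-2 * π * I * bform (wmap w x) T) = exp (-2 * π * I * bform x T) := by
  obtain ⟨k, hk⟩ := hx.exists_bform_wmap_eq hT w
  rw [hk, mul_add, exp_add, exp_neg_two_pi_I_mul_intCast, mul_one]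

theorem bform_smul_add_right (x T y : ℂ × ℂ) (c : ℂ) :
    bform x (c • T + y) = c * bform x T + bform x y := by
  simp only [bform, Prod.fst_add, Prod.snd_add, Prod.smul_fst, Prod.smul_snd, smul_eq_mul]
  ring

theorem weylAltSum_smul_add {u : ℕ} (hu : u ≠ 0) {x T : ℂ × ℂ} (hx : IsIntWeight x)
    (hT : IsIntWeight T) (y : ℂ × ℂ) :
    weylAltSum (-2 * π * I / u) x ((u : ℂ) • T + y) =
      exp (-2 * π * I * bform x T) * weylAltSum (-2 * π * I / u) x y := by
  have hu' : (u : ℂ) ≠ 0 := Nat.cast_ne_zero.2 hu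
  rw [weylAltSum, weylAltSum, Finset.mul_sum]
  refine Finset.sum_congr rfl fun w _ => ?_
  rw [bform_smul_add_right, ← hx.exp_bform_wmap hT w, mul_left_comm, ← exp_add]
  congr 2
  field_simp
  ring

theorem ScalP_eq_weylAltSum (u : ℕ) (l L : ℕ × ℕ × ℕ) :
    ScalP u l L =
      -I / (Real.sqrt 3 * u) * weylAltSum (-2 * π * I / u) (bar l + rho) (bar L + rho) := by
  simp only [ScalP, weylAltSum]
  congr 1
  refine Finset.sum_congr rfl fun w _ => ?_
  ring_nf

theorem SBP_eq_weylAltSum (u : ℕ) (l L : ℕ × ℕ × ℕ) :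
    SBP u l L = I / (Real.sqrt 3 * u) * exp (2 * π * I * (jBP l + jBP L - u / 3)) *
      weylAltSum (-2 * π * I / u) (bar l + rho) ((2 : ℂ) • (bar L + rho)) := by
  simp only [SBP, weylAltSum]
  congr 1
  refine Finset.sum_congr rfl fun w _ => ?_
  simp only [bform, Prod.smul_fst, Prod.smul_snd, smul_eq_mul]
  ring_nf

theorem mem_Pplus {u : ℕ} (hu : 3 ≤ u) {L : ℕ × ℕ × ℕ} :
    L ∈ Pplus u ↔ L.1 + L.2.1 + L.2.2 + 3 = u := by
  simp only [Pplus, Finset.mem_filter, Finset.mem_product, Finset.mem_range]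
  omega

theorem ScalP_vac_ne_zero {u : ℕ} (hu : 3 ≤ u) {L : ℕ × ℕ × ℕ} (hL : L ∈ Pplus u) :
    ScalP u (vac u) L ≠ 0 := by
  rw [mem_Pplus hu] at hL
  have hvac : bar (vac u) + rho = rho := by simp [bar, vac, rho]
  have hbar : bar L + rho = (((L.2.1 + 1 : ℕ) : ℂ), ((L.2.2 + 1 : ℕ) : ℂ)) := by
    simp [bar, rho]
  rw [ScalP_eq_weylAltSum, hvac, hbar]
  refine mul_ne_zero (div_ne_zero (by simp) ?_) (weylAltSum_rho_ne_zero (by omega) (by omega)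
    (by omega))
  exact mul_ne_zero (by simp) (Nat.cast_ne_zero.2 (by omega))

theorem sum_comp_eq_of_injOn {α β : Type*} [AddCommMonoid β] (s : Finset α) {σ : α → α}
    (hmaps : Set.MapsTo σ s s) (hinj : Set.InjOn σ s) (f : α → β) :
    ∑ x ∈ s, f (σ x) = ∑ x ∈ s, f x :=
  have hbij := (s.finite_toSet.injOn_iff_bijOn_of_mapsTo hmaps).1 hinj
  Finset.sum_nbij σ (fun _ hx => hmaps hx) hbij.injOn hbij.surjOn fun _ _ => rfl

/-- The triple with `bar (sigma u L) + rho` the point of the open level-`u` alcove in the affine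
Weyl group orbit of `2 (bar L + rho)`; for odd `u` that orbit avoids the alcove walls, and
`foldElt u L` is the finite Weyl group part of the folding element. -/
def sigma (u : ℕ) (L : ℕ × ℕ × ℕ) : ℕ × ℕ × ℕ :=
  if 2 * L.2.1 + 2 * L.2.2 + 4 < u then
    (u - (2 * L.2.1 + 2 * L.2.2 + 4) - 1, 2 * L.2.1 + 1, 2 * L.2.2 + 1)
  else if u < 2 * L.2.1 + 2 then
    (2 * L.2.2 + 1, 2 * u - (2 * L.2.1 + 2 * L.2.2 + 4) - 1, 2 * L.2.1 + 2 - u - 1)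
  else if u < 2 * L.2.2 + 2 then
    (2 * L.2.1 + 1, 2 * L.2.2 + 2 - u - 1, 2 * u - (2 * L.2.1 + 2 * L.2.2 + 4) - 1)
  else
    (2 * L.2.1 + 2 * L.2.2 + 4 - u - 1, u - (2 * L.2.2 + 2) - 1, u - (2 * L.2.1 + 2) - 1)

def foldElt (u : ℕ) (L : ℕ × ℕ × ℕ) : Fin 6 :=
  if 2 * L.2.1 + 2 * L.2.2 + 4 < u then 0
  else if u < 2 * L.2.1 + 2 then 4
  else if u < 2 * L.2.2 + 2 then 3
  else 5

theorem two_smul_bar_add_rho {u : ℕ} (hu : 3 ≤ u) (hodd : Odd u) {L : ℕ × ℕ × ℕ}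
    (hL : L ∈ Pplus u) : ∃ k : ℤ, (2 : ℂ) • (bar L + rho) =
      (u : ℂ) • ((k : ℂ), (k : ℂ)) + wmap (foldElt u L) (bar (sigma u L) + rho) := by
  rw [mem_Pplus hu] at hL
  obtain ⟨r, rfl⟩ := hodd
  unfold sigma foldElt
  split_ifs <;> [refine ⟨0, ?_⟩; refine ⟨1, ?_⟩; refine ⟨1, ?_⟩; refine ⟨1, ?_⟩] <;>
    simp (disch := omega) only [bar, rho, wmap, Matrix.cons_val, Prod.ext_iff, Prod.fst_add,
      Prod.snd_add, Prod.smul_fst, Prod.smul_snd, smul_eq_mul, Nat.cast_sub] <;>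
    push_cast <;> constructor <;> ring

theorem sigma_mem {u : ℕ} (hu : 3 ≤ u) (hodd : Odd u) {L : ℕ × ℕ × ℕ} (hL : L ∈ Pplus u) :
    sigma u L ∈ Pplus u := by
  rw [mem_Pplus hu] at hL ⊢
  obtain ⟨r, rfl⟩ := hodd
  unfold sigma
  split_ifs <;> dsimp only <;> omega

theorem sigma_injOn {u : ℕ} (hu : 3 ≤ u) (hodd : Odd u) : Set.InjOn (sigma u) (Pplus u) := by
  rintro ⟨a₀, a₁, a₂⟩ ha ⟨b₀, b₁, b₂⟩ hb h
  rw [Finset.mem_coe, mem_Pplus hu] at ha hb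
  dsimp only at ha hb
  obtain ⟨r, rfl⟩ := hodd
  simp only [sigma] at h
  split_ifs at h <;> simp only [Prod.mk.injEq] at h ⊢ <;> omega

def jPhase (l : ℕ × ℕ × ℕ) : ℂ := exp (2 * π * I * jBP l)

theorem jPhase_vac (u : ℕ) : jPhase (vac u) = 1 := by simp [jPhase, jBP, vac]

theorem jPhase_ne_zero (l : ℕ × ℕ × ℕ) : jPhase l ≠ 0 := exp_ne_zero _

def foldTwist (u : ℕ) (L : ℕ × ℕ × ℕ) : ℂ :=
  -(wdet (foldElt u L) : ℂ) * exp (2 * π * I * (jBP L - u / 3))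

theorem norm_foldTwist (u : ℕ) (L : ℕ × ℕ × ℕ) : ‖foldTwist u L‖ = 1 := by
  have hwdet : ∀ g : Fin 6, ‖(wdet g : ℂ)‖ = 1 := by intro g; fin_cases g <;> simp [wdet]
  rw [foldTwist, norm_mul, norm_neg, hwdet, one_mul, Complex.norm_exp]
  simp [jBP]

theorem SBP_eq_jPhase_mul_ScalP_sigma {u : ℕ} (hu : 3 ≤ u) (hodd : Odd u) (l : ℕ × ℕ × ℕ)
    {L : ℕ × ℕ × ℕ} (hL : L ∈ Pplus u) :
    SBP u l L = jPhase l * foldTwist u L * ScalP u l (sigma u L) := by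
  obtain ⟨k, hk⟩ := two_smul_bar_add_rho hu hodd hL
  obtain ⟨m, n, hmn⟩ := isIntWeight_bar_add_rho l
  have hexp : exp (-2 * π * I * bform (bar l + rho) ((k : ℂ), (k : ℂ))) = 1 := by
    rw [hmn, show bform ((m : ℂ), (n : ℂ)) ((k : ℂ), (k : ℂ)) = (k * (m + n) : ℤ) by
      simp only [bform]; push_cast; ring]
    exact exp_neg_two_pi_I_mul_intCast _
  rw [SBP_eq_weylAltSum, hk, weylAltSum_smul_add (by omega) (isIntWeight_bar_add_rho l)
    ⟨k, k, rfl⟩, weylAltSum_wmap_right, hexp, ScalP_eq_weylAltSum, jPhase, foldTwist,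
    show jBP l + jBP L - u / 3 = jBP l + (jBP L - u / 3) by ring, mul_add, exp_add]
  ring

def rot (L : ℕ × ℕ × ℕ) : ℕ × ℕ × ℕ := (L.2.2, L.1, L.2.1)

theorem rot_mem {u : ℕ} (hu : 3 ≤ u) {L : ℕ × ℕ × ℕ} (hL : L ∈ Pplus u) : rot L ∈ Pplus u := by
  rw [mem_Pplus hu] at hL ⊢
  simp only [rot]
  omega

theorem rot_injective : Function.Injective rot := by
  rintro ⟨a₀, a₁, a₂⟩ ⟨b₀, b₁, b₂⟩ h
  simp_all [rot]

theorem bar_rot_add_rho {u : ℕ} (hu : 3 ≤ u) {L : ℕ × ℕ × ℕ} (hL : L ∈ Pplus u) :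
    bar (rot L) + rho = (u : ℂ) • (((1 : ℤ) : ℂ), ((0 : ℤ) : ℂ)) + wmap 3 (bar L + rho) := by
  rw [mem_Pplus hu] at hL
  have hL₀ : (L.1 : ℂ) = u - L.2.1 - L.2.2 - 3 := by
    rw [← hL]; push_cast; ring
  simp only [bar, rot, rho, wmap, Matrix.cons_val, Prod.ext_iff, Prod.fst_add, Prod.snd_add,
    Prod.smul_fst, Prod.smul_snd, smul_eq_mul, hL₀]
  push_cast
  constructor <;> ring

theorem exp_bform_bar_add_rho_omega1 (l : ℕ × ℕ × ℕ) :
    exp (-2 * π * I * bform (bar l + rho) (((1 : ℤ) : ℂ), ((0 : ℤ) : ℂ))) = (jPhase l)⁻¹ := by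
  have h : -2 * π * I * bform (bar l + rho) (((1 : ℤ) : ℂ), ((0 : ℤ) : ℂ)) =
      -(2 * π * I * jBP l) + (-(l.2.1 + 1 : ℕ) : ℤ) * (2 * π * I) := by
    simp only [bform, bar, rho, jBP, Prod.fst_add, Prod.snd_add]
    push_cast
    ring
  rw [h, exp_add, exp_int_mul_two_pi_mul_I, mul_one, exp_neg, jPhase]

theorem ScalP_rot {u : ℕ} (hu : 3 ≤ u) (l : ℕ × ℕ × ℕ) {L : ℕ × ℕ × ℕ} (hL : L ∈ Pplus u) :
    ScalP u l (rot L) = (jPhase l)⁻¹ * ScalP u l L := by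
  have hwdet : (wdet 3 : ℂ) = 1 := by simp [wdet]
  rw [ScalP_eq_weylAltSum, bar_rot_add_rho hu hL, weylAltSum_smul_add (by omega)
    (isIntWeight_bar_add_rho l) ⟨1, 0, rfl⟩, weylAltSum_wmap_right, hwdet,
    exp_bform_bar_add_rho_omega1, ScalP_eq_weylAltSum]
  ring

def verlindeSum {ι : Type*} (s : Finset ι) (S : ι → ι → ℂ) (v a b c : ι) : ℂ :=
  ∑ L ∈ s, S a L * S b L * conj (S c L) / S v L

theorem verlindeSum_twist {ι : Type*} (s : Finset ι) {S S' : ι → ι → ℂ} {θ κ : ι → ℂ} {v : ι}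
    (hv : θ v = 1) (hκ : ∀ L ∈ s, ‖κ L‖ = 1) (hS : ∀ x, ∀ L ∈ s, S' x L = θ x * κ L * S x L)
    (a b c : ι) :
    verlindeSum s S' v a b c = θ a * θ b * conj (θ c) * verlindeSum s S v a b c := by
  rw [verlindeSum, verlindeSum, Finset.mul_sum]
  refine Finset.sum_congr rfl fun L hL => ?_
  have hκL : κ L * conj (κ L) = 1 := by rw [mul_conj', hκ L hL]; simp
  have hκ0 : κ L ≠ 0 := norm_ne_zero_iff.1 (by rw [hκ L hL]; exact one_ne_zero)
  set T := S a L * S b L * conj (S c L) / S v L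
  calc S' a L * S' b L * conj (S' c L) / S' v L
      = θ a * θ b * conj (θ c) * T * (κ L * conj (κ L)) := by
        simp only [hS _ L hL, hv, map_mul, T]
        field_simp
    _ = θ a * θ b * conj (θ c) * T := by rw [hκL, mul_one]

theorem verlindeSum_comp {ι : Type*} (s : Finset ι) {σ : ι → ι} (hmaps : Set.MapsTo σ s s)
    (hinj : Set.InjOn σ s) (S : ι → ι → ℂ) (v a b c : ι) :
    verlindeSum s (fun x L => S x (σ L)) v a b c = verlindeSum s S v a b c :=
  sum_comp_eq_of_injOn s hmaps hinj fun L => S a L * S b L * conj (S c L) / S v L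

theorem NBP_eq {u : ℕ} (hu : 3 ≤ u) (hodd : Odd u) (a b c : ℕ × ℕ × ℕ) :
    NBP u a b c = jPhase a * jPhase b * conj (jPhase c) * Nsl u a b c := by
  calc NBP u a b c = verlindeSum (Pplus u) (SBP u) (vac u) a b c := rfl
    _ = jPhase a * jPhase b * conj (jPhase c) *
          verlindeSum (Pplus u) (fun x L => ScalP u x (sigma u L)) (vac u) a b c :=
      verlindeSum_twist _ (jPhase_vac u) (fun L _ => norm_foldTwist u L)
        (fun x L hL => SBP_eq_jPhase_mul_ScalP_sigma hu hodd x hL) a b c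
    _ = jPhase a * jPhase b * conj (jPhase c) * Nsl u a b c := by
      rw [verlindeSum_comp _ (fun _ hL => sigma_mem hu hodd hL) (sigma_injOn hu hodd)]
      rfl

theorem Nsl_eq {u : ℕ} (hu : 3 ≤ u) (a b c : ℕ × ℕ × ℕ) :
    Nsl u a b c = (jPhase a)⁻¹ * (jPhase b)⁻¹ * conj (jPhase c)⁻¹ * Nsl u a b c := by
  calc Nsl u a b c = verlindeSum (Pplus u) (fun x L => ScalP u x (rot L)) (vac u) a b c :=
        (verlindeSum_comp _ (fun _ hL => rot_mem hu hL) rot_injective.injOn _ _ _ _ _).symm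
    _ = (jPhase a)⁻¹ * (jPhase b)⁻¹ * conj (jPhase c)⁻¹ * Nsl u a b c :=
      verlindeSum_twist (S := ScalP u) (θ := fun x => (jPhase x)⁻¹) (κ := 1) _
        (by rw [jPhase_vac, inv_one]) (fun _ _ => norm_one)
        (fun x L hL => by rw [ScalP_rot hu x hL, Pi.one_apply, mul_one]) a b c

/-- For odd `u ≥ 3` the vacuum rows of both S-matrices are nonvanishing and the
Verlinde-formula fusion multiplicities of the Bershadsky–Polyakov minimal model
coincide with those of the level-`(u-3)` sl₃ WZW model. -/
theorem stmt10 (u : ℕ) (hu : 3 ≤ u) (hodd : Odd u) :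
    (∀ L ∈ Pplus u, ScalP u (vac u) L ≠ 0 ∧ SBP u (vac u) L ≠ 0) ∧
    (∀ a ∈ Pplus u, ∀ b ∈ Pplus u, ∀ c ∈ Pplus u, NBP u a b c = Nsl u a b c) := by
  refine ⟨fun L hL => ⟨ScalP_vac_ne_zero hu hL, ?_⟩, fun a _ b _ c _ => ?_⟩
  · rw [SBP_eq_jPhase_mul_ScalP_sigma hu hodd _ hL, jPhase_vac, one_mul]
    exact mul_ne_zero (norm_ne_zero_iff.1 (by rw [norm_foldTwist]; exact one_ne_zero))
      (ScalP_vac_ne_zero hu (sigma_mem hu hodd hL))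
  calc NBP u a b c = jPhase a * jPhase b * conj (jPhase c) * Nsl u a b c :=
        NBP_eq hu hodd a b c
    _ = jPhase a * jPhase b * conj (jPhase c) *
          ((jPhase a)⁻¹ * (jPhase b)⁻¹ * conj (jPhase c)⁻¹ * Nsl u a b c) := by
      rw [← Nsl_eq hu]
    _ = Nsl u a b c := by
      have := jPhase_ne_zero a
      have := jPhase_ne_zero b
      have : conj (jPhase c) ≠ 0 := (map_ne_zero _).2 (jPhase_ne_zero c)
      rw [map_inv₀]
      field_simp

end
end

section
/- Let u≥3 be odd. For all λ,λ′,λ″∈P⁺ᵘ and every n∈ℤ: N^{BP}(∇ⁿ(λ),λ′,λ″) = N^{BP}(λ,∇ⁿ(λ′),λ″) = N^{BP}(λ,λ′,∇^{−n}(λ″)), and N^{BP}(d(λ),d(λ′),d(λ″)) = N^{BP}(λ,λ′,λ″). -/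
noncomputable section

open Complex

lemma key_exp (x y : ℂ) (k : ℤ) (h : x = y + 2 * Real.pi * I * k) :
    Complex.exp x = Complex.exp y := by
  rw [h, Complex.exp_add]
  have : Complex.exp (2 * Real.pi * I * k) = 1 := by
    rw [show (2 * Real.pi * I * k : ℂ) = k * (2 * Real.pi * I) by ring]
    exact Complex.exp_int_mul_two_pi_mul_I k
  rw [this, mul_one]

lemma step_exp (c x g y : ℂ) (k : ℤ) (h : x = g + y + 2 * Real.pi * I * k) :
    c * Complex.exp x = Complex.exp g * (c * Complex.exp y) := by
  rw [key_exp x (g + y) k (by linear_combination h), Complex.exp_add]; ring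

def eps (u : ℕ) (m : ℕ × ℕ × ℕ) : ℂ :=
  Complex.exp (2 * Real.pi * I * ((u : ℂ) - 2 * m.2.1 - 4 * m.2.2) / 3)

lemma SBP_nabla_left (u : ℕ) (hu : 3 ≤ u) (l m : ℕ × ℕ × ℕ)
    (hl : l.1 + l.2.1 + l.2.2 = u - 3) :
    SBP u (nabla l) m = eps u m * SBP u l m := by
  have hu0 : (u : ℂ) ≠ 0 := by
    exact_mod_cast Nat.cast_ne_zero.mpr (by omega)
  have hc : (l.1 : ℂ) = (u : ℂ) - 3 - l.2.1 - l.2.2 := by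
    have h1 : ((l.1 + l.2.1 + l.2.2 : ℕ) : ℂ) = ((u - 3 : ℕ) : ℂ) := by rw [hl]
    push_cast [hu] at h1
    linear_combination h1
  set G : ℂ := -4 * Real.pi * I * ((m.2.1 : ℂ) + 2 * (m.2.2 : ℂ) + 3) / 3 with hG
  have hsum : (∑ w : Fin 6, (wdet w : ℂ) *
      exp (-4 * Real.pi * I * bform (wmap w (bar (nabla l) + rho)) (bar m + rho) / u))
      = Complex.exp G * ∑ w : Fin 6, (wdet w : ℂ) *
      exp (-4 * Real.pi * I * bform (wmap w (bar l + rho)) (bar m + rho) / u) := by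
    rw [Finset.mul_sum]
    refine Fintype.sum_bijective (![4, 5, 1, 0, 3, 2] : Fin 6 → Fin 6) (by decide) _ _ ?_
    intro w
    fin_cases w <;>
      simp only [wdet, wmap, bar, rho, bform, nabla, Matrix.cons_val_zero, Matrix.cons_val_one,
        Matrix.head_cons, Matrix.cons_val_two, Matrix.tail_cons, Matrix.cons_val_three,
        Matrix.cons_val_four, Matrix.cons_val_succ, show (5:Fin 6) = Fin.succ 4 from rfl, Matrix.head_fin_const, Fin.isValue, Int.cast_one, Int.cast_neg,
        Matrix.cons_val', Matrix.cons_val_fin_one, Matrix.empty_val',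
        Prod.fst_add, Prod.snd_add, Prod.mk_add_mk] <;>
      [ (refine step_exp _ _ _ _ 0 ?_);
        (refine step_exp _ _ _ _ 0 ?_);
        (refine step_exp _ _ _ _ (2 * (m.2.2 : ℤ) + 2) ?_);
        (refine step_exp _ _ _ _ (2 * (m.2.1 : ℤ) + 2 * (m.2.2 : ℤ) + 4) ?_);
        (refine step_exp _ _ _ _ (2 * (m.2.2 : ℤ) + 2) ?_);
        (refine step_exp _ _ _ _ (2 * (m.2.1 : ℤ) + 2 * (m.2.2 : ℤ) + 4) ?_)] <;>
      (rw [hc]; field_simp; push_cast; ring)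
  have hpre : exp (2 * Real.pi * I * (jBP (nabla l) + jBP m - (u : ℂ) / 3)) * Complex.exp G
      = eps u m * exp (2 * Real.pi * I * (jBP l + jBP m - (u : ℂ) / 3)) := by
    rw [eps, ← Complex.exp_add, ← Complex.exp_add]
    refine key_exp _ _ (-(3 + (l.2.2 : ℤ))) ?_
    simp only [jBP, nabla, hG]
    rw [hc]; field_simp; push_cast; ring
  simp only [SBP]
  rw [hsum]
  calc (I / (Real.sqrt 3 * u)) * exp (2 * Real.pi * I * (jBP (nabla l) + jBP m - (u : ℂ) / 3)) *
        (Complex.exp G * ∑ w : Fin 6, (wdet w : ℂ) *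
          exp (-4 * Real.pi * I * bform (wmap w (bar l + rho)) (bar m + rho) / u))
      = (exp (2 * Real.pi * I * (jBP (nabla l) + jBP m - (u : ℂ) / 3)) * Complex.exp G) *
        ((I / (Real.sqrt 3 * u)) * ∑ w : Fin 6, (wdet w : ℂ) *
          exp (-4 * Real.pi * I * bform (wmap w (bar l + rho)) (bar m + rho) / u)) := by ring
    _ = _ := by rw [hpre]; ring

lemma term_congr (c x y : ℂ) (h : x = y) : c * Complex.exp x = c * Complex.exp y := by rw [h]

set_option maxHeartbeats 1000000 in
lemma weyl_sum_symm (u : ℕ) (x y : ℂ × ℂ) :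
    (∑ w : Fin 6, (wdet w : ℂ) * exp (-4 * Real.pi * I * bform (wmap w x) y / u))
    = ∑ w : Fin 6, (wdet w : ℂ) * exp (-4 * Real.pi * I * bform (wmap w y) x / u) := by
  rw [Fin.sum_univ_six, Fin.sum_univ_six]
  simp only [wdet, wmap, bform, Matrix.cons_val_zero, Matrix.cons_val_one,
    Matrix.head_cons, Matrix.cons_val_two, Matrix.tail_cons, Matrix.cons_val_three,
    Matrix.cons_val_four, Matrix.cons_val_succ, show (5:Fin 6) = Fin.succ 4 from rfl,
    Int.cast_one, Int.cast_neg]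
  ring_nf

set_option maxHeartbeats 1000000 in
lemma weyl_sum_swap (u : ℕ) (x y : ℂ × ℂ) :
    (∑ w : Fin 6, (wdet w : ℂ) *
      exp (-4 * Real.pi * I * bform (wmap w (x.2, x.1)) (y.2, y.1) / u))
    = ∑ w : Fin 6, (wdet w : ℂ) * exp (-4 * Real.pi * I * bform (wmap w x) y / u) := by
  rw [Fin.sum_univ_six, Fin.sum_univ_six]
  simp only [wdet, wmap, bform, Matrix.cons_val_zero, Matrix.cons_val_one,
    Matrix.head_cons, Matrix.cons_val_two, Matrix.tail_cons, Matrix.cons_val_three,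
    Matrix.cons_val_four, Matrix.cons_val_succ, show (5:Fin 6) = Fin.succ 4 from rfl,
    Int.cast_one, Int.cast_neg]
  ring_nf

lemma SBP_symm (u : ℕ) (l m : ℕ × ℕ × ℕ) : SBP u l m = SBP u m l := by
  simp only [SBP]
  rw [weyl_sum_symm u (bar l + rho) (bar m + rho), add_comm (jBP l) (jBP m)]

lemma SBP_dd (u : ℕ) (l m : ℕ × ℕ × ℕ) :
    SBP u (dd l) (dd m) = Complex.exp (4 * Real.pi * I *
      ((l.2.1 : ℂ) - l.2.2 + (m.2.1 : ℂ) - m.2.2) / 3) * SBP u l m := by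
  have hpre : exp (2 * Real.pi * I * (jBP (dd l) + jBP (dd m) - (u : ℂ) / 3))
      = Complex.exp (4 * Real.pi * I * ((l.2.1 : ℂ) - l.2.2 + (m.2.1 : ℂ) - m.2.2) / 3) *
        exp (2 * Real.pi * I * (jBP l + jBP m - (u : ℂ) / 3)) := by
    rw [← Complex.exp_add]
    refine key_exp _ _ 0 ?_
    simp only [jBP, dd]
    push_cast
    ring
  simp only [SBP]
  rw [show bar (dd l) + rho = ((bar l + rho).2, (bar l + rho).1) from rfl,
    show bar (dd m) + rho = ((bar m + rho).2, (bar m + rho).1) from rfl,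
    weyl_sum_swap u (bar l + rho) (bar m + rho), hpre]
  ring

lemma mem_Pplus_s11 {u : ℕ} (hu : 3 ≤ u) {l : ℕ × ℕ × ℕ} :
    l ∈ Pplus u ↔ l.1 + l.2.1 + l.2.2 = u - 3 := by
  simp only [Pplus, Finset.mem_filter, Finset.mem_product, Finset.mem_range]
  omega

lemma sum_reindex_nabla (u : ℕ) (hu : 3 ≤ u) (f : ℕ × ℕ × ℕ → ℂ) :
    ∑ L ∈ Pplus u, f L = ∑ L ∈ Pplus u, f (nabla L) := by
  refine Finset.sum_nbij' (i := fun L => nabla (nabla L)) (j := fun L => nabla L)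
    ?_ ?_ ?_ ?_ ?_
  · intro x hx; rw [mem_Pplus_s11 hu] at hx ⊢; simp [nabla]; omega
  · intro x hx; rw [mem_Pplus_s11 hu] at hx ⊢; simp [nabla]; omega
  · intro x hx; rfl
  · intro x hx; rfl
  · intro x hx; rfl

lemma sum_reindex_dd (u : ℕ) (hu : 3 ≤ u) (f : ℕ × ℕ × ℕ → ℂ) :
    ∑ L ∈ Pplus u, f L = ∑ L ∈ Pplus u, f (dd L) := by
  refine Finset.sum_nbij' (i := fun L => dd L) (j := fun L => dd L) ?_ ?_ ?_ ?_ ?_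
  · intro x hx; rw [mem_Pplus_s11 hu] at hx ⊢; simp [dd]; omega
  · intro x hx; rw [mem_Pplus_s11 hu] at hx ⊢; simp [dd]; omega
  · intro x hx; rfl
  · intro x hx; rfl
  · intro x hx; rfl

lemma sumcond_nabla_iter (l : ℕ × ℕ × ℕ) (t : ℕ) (h : l.1 + l.2.1 + l.2.2 = t) (k : ℕ) :
    (nabla^[k] l).1 + (nabla^[k] l).2.1 + (nabla^[k] l).2.2 = t := by
  induction k with
  | zero => simpa using h
  | succ k ih =>
    rw [Function.iterate_succ_apply']
    simp only [nabla]
    omega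

lemma SBP_nabla_right (u : ℕ) (hu : 3 ≤ u) (l m : ℕ × ℕ × ℕ)
    (hm : m.1 + m.2.1 + m.2.2 = u - 3) :
    SBP u l (nabla m) = eps u l * SBP u l m := by
  rw [SBP_symm u l (nabla m), SBP_nabla_left u hu m l hm, SBP_symm u m l]

lemma SBP_nabla_iter (u : ℕ) (hu : 3 ≤ u) (l m : ℕ × ℕ × ℕ)
    (hl : l.1 + l.2.1 + l.2.2 = u - 3) (k : ℕ) :
    SBP u (nabla^[k] l) m = eps u m ^ k * SBP u l m := by
  induction k with
  | zero => simp
  | succ k ih =>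
    rw [Function.iterate_succ_apply',
      SBP_nabla_left u hu _ m (sumcond_nabla_iter l (u - 3) hl k), ih, pow_succ]
    ring

lemma eps_conj (u : ℕ) (m : ℕ × ℕ × ℕ) : (starRingEnd ℂ) (eps u m) = (eps u m)⁻¹ := by
  rw [eps, ← Complex.exp_conj, ← Complex.exp_neg]
  congr 1
  simp only [map_div₀, map_mul, map_sub, map_ofNat, Complex.conj_I, Complex.conj_ofReal,
    map_natCast]
  ring

lemma eps_cube (u : ℕ) (m : ℕ × ℕ × ℕ) : eps u m ^ 3 = 1 := by
  rw [eps, pow_succ, pow_succ, pow_one, ← Complex.exp_add, ← Complex.exp_add,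
    show (1 : ℂ) = Complex.exp 0 from Complex.exp_zero.symm]
  refine key_exp _ _ ((u : ℤ) - 2 * m.2.1 - 4 * m.2.2) ?_
  push_cast
  ring

lemma pow_match (e : ℂ) (he : e ^ 3 = 1) (n : ℤ) :
    e ^ (n % 3).toNat = e⁻¹ ^ ((-n) % 3).toNat := by
  have h0 : e ≠ 0 := by
    intro h; rw [h] at he; norm_num at he
  have hcase : n % 3 = 0 ∧ (-n) % 3 = 0 ∨ n % 3 = 1 ∧ (-n) % 3 = 2 ∨
      n % 3 = 2 ∧ (-n) % 3 = 1 := by omega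
  rcases hcase with ⟨h1, h2⟩ | ⟨h1, h2⟩ | ⟨h1, h2⟩ <;> rw [h1, h2] <;>
      simp only [show Int.toNat 0 = 0 from rfl, show Int.toNat 1 = 1 from rfl,
        show Int.toNat 2 = 2 from rfl, pow_zero, pow_one]
  · field_simp
    linear_combination he
  · field_simp
    linear_combination he

lemma eps_ne (u : ℕ) (m : ℕ × ℕ × ℕ) : eps u m ≠ 0 := Complex.exp_ne_zero _

lemma quot_helper (pa pb pc pv Sa Sb Sc Sv Q : ℂ) (hv : pv ≠ 0)
    (hphase : pa * pb * pc = Q * pv) :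
    (pa * Sa) * (pb * Sb) * (pc * Sc) / (pv * Sv) = Q * (Sa * Sb * Sc / Sv) := by
  have hnum : (pa * Sa) * (pb * Sb) * (pc * Sc) = pv * (Q * (Sa * Sb * Sc)) := by
    linear_combination Sa * Sb * Sc * hphase
  rw [hnum, mul_div_mul_left _ _ hv, mul_div_assoc]

/-- Symmetries of the Bershadsky–Polyakov fusion coefficients under `∇ⁿ` and `d`. -/
theorem stmt11 (u : ℕ) (hu : 3 ≤ u) (hodd : Odd u)
    (a b c : ℕ × ℕ × ℕ)
    (ha : a ∈ Pplus u) (hb : b ∈ Pplus u) (hc : c ∈ Pplus u) (n : ℤ) :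
    NBP u (nablaZ n a) b c = NBP u a (nablaZ n b) c ∧
    NBP u a (nablaZ n b) c = NBP u a b (nablaZ (-n) c) ∧
    NBP u (dd a) (dd b) (dd c) = NBP u a b c := by
  have hAs : a.1 + a.2.1 + a.2.2 = u - 3 := (mem_Pplus_s11 hu).1 ha
  have hBs : b.1 + b.2.1 + b.2.2 = u - 3 := (mem_Pplus_s11 hu).1 hb
  have hCs : c.1 + c.2.1 + c.2.2 = u - 3 := (mem_Pplus_s11 hu).1 hc
  have p1 : NBP u (nablaZ n a) b c = NBP u a (nablaZ n b) c := by
    simp only [NBP, nablaZ]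
    refine Finset.sum_congr rfl fun L hL => ?_
    rw [SBP_nabla_iter u hu a L hAs ((n % 3).toNat),
      SBP_nabla_iter u hu b L hBs ((n % 3).toNat)]
    ring
  have p2 : NBP u a (nablaZ n b) c = NBP u a b (nablaZ (-n) c) := by
    simp only [NBP, nablaZ]
    refine Finset.sum_congr rfl fun L hL => ?_
    rw [SBP_nabla_iter u hu b L hBs ((n % 3).toNat),
      SBP_nabla_iter u hu c L hCs (((-n) % 3).toNat), map_mul, map_pow, eps_conj,
      ← pow_match (eps u L) (eps_cube u L) n]
    ring
  refine ⟨p1, p2, ?_⟩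
  have hq : NBP u a b c = (eps u a * eps u b * (starRingEnd ℂ) (eps u c) / eps u (vac u)) *
      NBP u a b c := by
    have h2 : ∀ L ∈ Pplus u,
        SBP u a (nabla L) * SBP u b (nabla L) * (starRingEnd ℂ) (SBP u c (nabla L)) /
          SBP u (vac u) (nabla L)
        = (eps u a * eps u b * (starRingEnd ℂ) (eps u c) / eps u (vac u)) *
          (SBP u a L * SBP u b L * (starRingEnd ℂ) (SBP u c L) / SBP u (vac u) L) := by
      intro L hL
      have hLs : L.1 + L.2.1 + L.2.2 = u - 3 := (mem_Pplus_s11 hu).1 hL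
      rw [SBP_nabla_right u hu a L hLs, SBP_nabla_right u hu b L hLs,
        SBP_nabla_right u hu c L hLs, SBP_nabla_right u hu (vac u) L hLs, map_mul]
      exact quot_helper _ _ _ _ _ _ _ _ _ (eps_ne u (vac u))
        (div_mul_cancel₀ _ (eps_ne u (vac u))).symm
    calc NBP u a b c
        = ∑ L ∈ Pplus u, SBP u a L * SBP u b L * (starRingEnd ℂ) (SBP u c L) /
            SBP u (vac u) L := rfl
      _ = ∑ L ∈ Pplus u, SBP u a (nabla L) * SBP u b (nabla L) *
            (starRingEnd ℂ) (SBP u c (nabla L)) / SBP u (vac u) (nabla L) :=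
          sum_reindex_nabla u hu _
      _ = ∑ L ∈ Pplus u, (eps u a * eps u b * (starRingEnd ℂ) (eps u c) / eps u (vac u)) *
            (SBP u a L * SBP u b L * (starRingEnd ℂ) (SBP u c L) / SBP u (vac u) L) :=
          Finset.sum_congr rfl h2
      _ = (eps u a * eps u b * (starRingEnd ℂ) (eps u c) / eps u (vac u)) *
          NBP u a b c := by rw [← Finset.mul_sum]; rfl
  have hdd : NBP u (dd a) (dd b) (dd c)
      = Complex.exp (4 * Real.pi * I * (((a.2.1 : ℂ) - a.2.2) + ((b.2.1 : ℂ) - b.2.2) -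
          ((c.2.1 : ℂ) - c.2.2)) / 3) * NBP u a b c := by
    have h2 : ∀ L ∈ Pplus u,
        SBP u (dd a) (dd L) * SBP u (dd b) (dd L) * (starRingEnd ℂ) (SBP u (dd c) (dd L)) /
          SBP u (vac u) (dd L)
        = Complex.exp (4 * Real.pi * I * (((a.2.1 : ℂ) - a.2.2) + ((b.2.1 : ℂ) - b.2.2) -
            ((c.2.1 : ℂ) - c.2.2)) / 3) *
          (SBP u a L * SBP u b L * (starRingEnd ℂ) (SBP u c L) / SBP u (vac u) L) := by
      intro L hL
      rw [SBP_dd u a L, SBP_dd u b L, SBP_dd u c L,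
        show SBP u (vac u) (dd L) = Complex.exp (4 * Real.pi * I *
          (((vac u).2.1 : ℂ) - (vac u).2.2 + (L.2.1 : ℂ) - L.2.2) / 3) * SBP u (vac u) L from
          SBP_dd u (vac u) L,
        map_mul,
        show (starRingEnd ℂ) (Complex.exp (4 * Real.pi * I *
          ((c.2.1 : ℂ) - c.2.2 + (L.2.1 : ℂ) - L.2.2) / 3)) = Complex.exp (-(4 * Real.pi * I *
          ((c.2.1 : ℂ) - c.2.2 + (L.2.1 : ℂ) - L.2.2) / 3)) from by
            rw [← Complex.exp_conj]
            congr 1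
            simp only [map_div₀, map_mul, map_sub, map_add, map_ofNat, Complex.conj_I,
              Complex.conj_ofReal, map_natCast]
            ring]
      refine quot_helper _ _ _ _ _ _ _ _ _ (Complex.exp_ne_zero _) ?_
      rw [← Complex.exp_add, ← Complex.exp_add, ← Complex.exp_add]
      refine key_exp _ _ 0 ?_
      simp [vac]
      push_cast
      ring
    calc NBP u (dd a) (dd b) (dd c)
        = ∑ L ∈ Pplus u, SBP u (dd a) L * SBP u (dd b) L * (starRingEnd ℂ) (SBP u (dd c) L) /
            SBP u (vac u) L := rfl
      _ = ∑ L ∈ Pplus u, SBP u (dd a) (dd L) * SBP u (dd b) (dd L) *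
            (starRingEnd ℂ) (SBP u (dd c) (dd L)) / SBP u (vac u) (dd L) :=
          sum_reindex_dd u hu _
      _ = ∑ L ∈ Pplus u, Complex.exp (4 * Real.pi * I * (((a.2.1 : ℂ) - a.2.2) +
            ((b.2.1 : ℂ) - b.2.2) - ((c.2.1 : ℂ) - c.2.2)) / 3) *
            (SBP u a L * SBP u b L * (starRingEnd ℂ) (SBP u c L) / SBP u (vac u) L) :=
          Finset.sum_congr rfl h2
      _ = _ := by rw [← Finset.mul_sum]; rfl
  have hphase1 : Complex.exp (4 * Real.pi * I * (((a.2.1 : ℂ) - a.2.2) + ((b.2.1 : ℂ) - b.2.2) -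
        ((c.2.1 : ℂ) - c.2.2)) / 3) *
      (eps u a * eps u b * (starRingEnd ℂ) (eps u c) / eps u (vac u)) = 1 := by
    rw [eps_conj]
    simp only [eps]
    rw [← Complex.exp_neg, ← Complex.exp_add, ← Complex.exp_add, ← Complex.exp_sub,
      ← Complex.exp_add, ← Complex.exp_zero]
    refine key_exp _ _ (2 * (c.2.2 : ℤ) - 2 * (a.2.2 : ℤ) - 2 * (b.2.2 : ℤ)) ?_
    simp [vac]
    push_cast
    ring
  rw [hdd]
  conv_lhs => rw [hq]
  rw [← mul_assoc, hphase1, one_mul]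

end
end
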